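/- Let X, Y be independent random vectors in [0,∞)^{m+1}, with X having density f_m(x) = exp(-∑ x_i) with respect to Lebesgue measure. Let B be an event independent of X (measurable with respect to a σ-algebra independent of X, with Y measurable with respect to that σ-algebra). Let ε > 0 and let E ⊆ [ε,∞)^{m+1} ∩ {f_m ≥ ε} be Borel with positive Lebesgue measure. Then P({X+Y ∈ E} ∩ B) ≥ ε · λ^{m+1}(E) · P(B ∩ {Y ∈ [0,ε]^{m+1}}). -/

import Mathlib

/-!
Conditionally on `(1_B, Y) = (1, y)` with `y ∈ [0, ε]^{m+1}`, independence leaves `X` with its own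
law, so the event has probability `P(X ∈ E - y)`. On `E - y` the coordinates are still nonnegative
and `∑ xᵢ` only decreased, so the density is at least `ε` there, while `λ(E - y) = λ(E)`.
Integrating this bound over the event `B ∩ {Y ∈ [0, ε]^{m+1}}` gives the claim.
-/

open MeasureTheory ProbabilityTheory Set
open scoped ENNReal

theorem ProbabilityTheory.IndepFun.mul_measure_le_measure_preimage_prodMk
    {Ω β γ : Type*} [MeasurableSpace Ω] [MeasurableSpace β] [MeasurableSpace γ]
    {P : Measure Ω} [IsFiniteMeasure P] {T : Ω → β} {X : Ω → γ}
    (h : IndepFun T X P) (hT : Measurable T) (hX : Measurable X)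
    {G : Set β} (hG : MeasurableSet G) {S : Set (β × γ)} (hS : MeasurableSet S) {c : ℝ≥0∞}
    (hc : ∀ t ∈ G, c ≤ P.map X (Prod.mk t ⁻¹' S)) :
    c * P (T ⁻¹' G) ≤ P ((fun ω => (T ω, X ω)) ⁻¹' S) := by
  rw [← Measure.map_apply (hT.prodMk hX) hS, h.map_prod_eq_prod_map_map hT.aemeasurable
    hX.aemeasurable, Measure.prod_apply hS, ← Measure.map_apply hT hG, ← setLIntegral_const]
  exact (setLIntegral_mono' hG hc).trans (setLIntegral_le_lintegral _ _)

theorem le_withDensity_preimage_add_right {G : Type*} [MeasurableSpace G] [AddGroup G]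
    [MeasurableAdd G] (μ : Measure G) [μ.IsAddRightInvariant] {f : G → ℝ≥0∞} {E : Set G}
    (hE : MeasurableSet E) (y : G) {c : ℝ≥0∞} (hc : ∀ x, x + y ∈ E → c ≤ f x) :
    c * μ E ≤ μ.withDensity f ((· + y) ⁻¹' E) := by
  have hEy : MeasurableSet ((· + y) ⁻¹' E) := hE.preimage (measurable_add_const y)
  rw [withDensity_apply _ hEy, ← measure_preimage_add_right μ y E, ← setLIntegral_const]
  exact setLIntegral_mono' hEy hc

noncomputable def expDensity (n : ℕ) (x : Fin n → ℝ) : ℝ≥0∞ :=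
  ENNReal.ofReal (indicator {x : Fin n → ℝ | ∀ i, 0 ≤ x i} (fun x => Real.exp (-(∑ i, x i))) x)

theorem ofReal_le_expDensity_of_add_mem {n : ℕ} {ε : ℝ} {x y : Fin n → ℝ}
    (hy : ∀ i, y i ∈ Icc 0 ε)
    (hxy : x + y ∈ {x | ∀ i, ε ≤ x i} ∩ {x | ε ≤ Real.exp (-(∑ i, x i))}) :
    ENNReal.ofReal ε ≤ expDensity n x := by
  obtain ⟨hmin, hexp⟩ := hxy
  have hx : ∀ i, 0 ≤ x i := fun i => by
    linarith [hmin i, (hy i).2, show (x + y) i = x i + y i from rfl]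
  have hsum : ∑ i, x i ≤ ∑ i, (x + y) i :=
    Finset.sum_le_sum fun i _ => by simp only [Pi.add_apply]; linarith [(hy i).1]
  rw [expDensity, indicator_of_mem (show x ∈ {x : Fin n → ℝ | ∀ i, 0 ≤ x i} from hx)]
  exact ENNReal.ofReal_le_ofReal (hexp.trans (Real.exp_le_exp.2 (neg_le_neg hsum)))

theorem stmt6_general {Ω : Type*} [MeasurableSpace Ω] (P : Measure Ω) [IsProbabilityMeasure P]
    (m : ℕ) (X Y : Ω → (Fin (m + 1) → ℝ)) (hX : Measurable X) (hY : Measurable Y)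
    (hdens : P.map X = (volume : Measure (Fin (m + 1) → ℝ)).withDensity
      (fun x => ENNReal.ofReal (Set.indicator {x : Fin (m + 1) → ℝ | ∀ i, 0 ≤ x i}
        (fun x => Real.exp (-(∑ i, x i))) x)))
    (B : Set Ω) (hB : MeasurableSet B)
    (hindep : IndepFun (fun ω => (B.indicator (fun _ => (1 : ℝ)) ω, Y ω)) X P)
    (ε : ℝ) (E : Set (Fin (m + 1) → ℝ)) (hE : MeasurableSet E)
    (hEsub : E ⊆ {x | ∀ i, ε ≤ x i} ∩ {x | ε ≤ Real.exp (-(∑ i, x i))}) :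
    ENNReal.ofReal ε * volume E * P (B ∩ {ω | ∀ i, Y ω i ∈ Set.Icc 0 ε})
      ≤ P ({ω | X ω + Y ω ∈ E} ∩ B) := by
  have hG : MeasurableSet (({1} : Set ℝ) ×ˢ {y : Fin (m + 1) → ℝ | ∀ i, y i ∈ Icc 0 ε}) :=
    (measurableSet_singleton 1).prod <| by
      simp_rw [← mem_univ_pi]; exact .univ_pi fun _ => measurableSet_Icc
  have hS : MeasurableSet {p : (ℝ × (Fin (m + 1) → ℝ)) × (Fin (m + 1) → ℝ) |
      p.2 + p.1.2 ∈ E ∧ p.1.1 = 1} :=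
    ((measurable_snd.add measurable_fst.snd) hE).inter
      (measurable_fst.fst (measurableSet_singleton 1))
  have key := hindep.mul_measure_le_measure_preimage_prodMk
    ((measurable_const.indicator hB).prodMk hY) hX hG hS (c := ENNReal.ofReal ε * volume E)
    fun t ht => by
      obtain ⟨ht1, ht2⟩ := mem_prod.1 ht
      rw [show Prod.mk t ⁻¹' _ = (· + t.2) ⁻¹' E by ext; simp [mem_singleton_iff.1 ht1], hdens]
      exact le_withDensity_preimage_add_right _ hE t.2
        fun x hx => ofReal_le_expDensity_of_add_mem ht2 (hEsub hx)
  convert key using 3 <;> ext ω <;> simp [and_comm]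

theorem stmt6 {Ω : Type*} [MeasurableSpace Ω] (P : Measure Ω) [IsProbabilityMeasure P]
    (m : ℕ) (X Y : Ω → (Fin (m + 1) → ℝ)) (hX : Measurable X) (hY : Measurable Y)
    (hdens : P.map X = (volume : Measure (Fin (m + 1) → ℝ)).withDensity
      (fun x => ENNReal.ofReal (Set.indicator {x : Fin (m + 1) → ℝ | ∀ i, 0 ≤ x i}
        (fun x => Real.exp (-(∑ i, x i))) x)))
    (B : Set Ω) (hB : MeasurableSet B)
    (hindep : IndepFun (fun ω => (B.indicator (fun _ => (1 : ℝ)) ω, Y ω)) X P)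
    (ε : ℝ) (hε : 0 < ε) (E : Set (Fin (m + 1) → ℝ)) (hE : MeasurableSet E)
    (hEsub : E ⊆ {x | ∀ i, ε ≤ x i} ∩ {x | ε ≤ Real.exp (-(∑ i, x i))})
    (hEvol : 0 < volume E) :
    ENNReal.ofReal ε * volume E * P (B ∩ {ω | ∀ i, Y ω i ∈ Set.Icc 0 ε})
      ≤ P ({ω | X ω + Y ω ∈ E} ∩ B) :=
  stmt6_general P m X Y hX hY hdens B hB hindep ε E hE hEsub
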